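/- Let f : ℝ^m → ℝ be differentiable, L-smooth with constant L > 0, satisfy the PL condition with ν > 0 and attained infimum f*, and let 0 < δ. Then for any x̄ ∈ ℝ^m and any g ∈ ℝ^m, f(x̄ - δg) - f* ≤ (1 - δν/2)(f(x̄) - f*) - (δ/4)(1 - 2δL)‖g‖² + (δ/2)‖g - ∇f(x̄)‖². -/

import Mathlib

open InnerProductSpace intervalIntegral

local notation "⟪" x ", " y "⟫" => @inner ℝ _ _ x y

lemma descent_lemma {m : ℕ} (f : EuclideanSpace ℝ (Fin m) → ℝ) (L : ℝ)
    (hdiff : Differentiable ℝ f) (hL : 0 < L)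
    (hsmooth : ∀ x y, ‖gradient f x - gradient f y‖ ≤ L * ‖x - y‖)
    (x d : EuclideanSpace ℝ (Fin m)) :
    f (x + d) ≤ f x + ⟪gradient f x, d⟫ + L / 2 * ‖d‖ ^ 2 := by
  set φ' : ℝ → ℝ := fun t => ⟪gradient f (x + t • d), d⟫ with hφ'
  have hderiv : ∀ t : ℝ, HasDerivAt (fun t : ℝ => f (x + t • d)) (φ' t) t := by
    intro t
    have h1 : HasDerivAt (fun t : ℝ => x + t • d) d t := by
      simpa using ((hasDerivAt_id t).smul_const d).const_add x
    have h2 := (hdiff (x + t • d)).hasGradientAt.hasFDerivAt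
    have := h2.comp_hasDerivAt t h1
    simpa [hφ', Function.comp_def] using this
  have hgrad_cont : Continuous fun z => gradient f z := by
    have : LipschitzWith (Real.toNNReal L) (fun z => gradient f z) := by
      intro a b
      rw [edist_nndist, edist_nndist]
      rw [← ENNReal.coe_mul, ENNReal.coe_le_coe, ← NNReal.coe_le_coe]
      push_cast
      rw [Real.coe_toNNReal _ hL.le]
      simpa [dist_eq_norm, nndist_eq_nnnorm] using hsmooth a b
    exact this.continuous
  have hcont : Continuous φ' := by
    apply Continuous.inner
    · exact hgrad_cont.comp (continuous_const.add (continuous_id.smul continuous_const))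
    · exact continuous_const
  have hint : f (x + d) - f x = ∫ t in (0:ℝ)..1, φ' t := by
    have := intervalIntegral.integral_eq_sub_of_hasDerivAt
      (fun t _ => hderiv t) (hcont.intervalIntegrable 0 1)
    simp at this
    linarith [this]
  have hbound : (∫ t in (0:ℝ)..1, φ' t) ≤
      ∫ t in (0:ℝ)..1, (⟪gradient f x, d⟫ + L * t * ‖d‖ ^ 2) := by
    apply intervalIntegral.integral_mono_on (by norm_num)
      (hcont.intervalIntegrable 0 1)
      ((continuous_const.add ((continuous_const.mul continuous_id).mul continuous_const) : Continuous fun t : ℝ => ⟪gradient f x, d⟫ + L * t * ‖d‖ ^ 2).intervalIntegrable 0 1)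
    intro t ht
    have h1 : φ' t - ⟪gradient f x, d⟫ = ⟪gradient f (x + t • d) - gradient f x, d⟫ := by
      rw [inner_sub_left]
    have h2 : ⟪gradient f (x + t • d) - gradient f x, d⟫ ≤ L * t * ‖d‖ ^ 2 := by
      calc ⟪gradient f (x + t • d) - gradient f x, d⟫
          ≤ ‖gradient f (x + t • d) - gradient f x‖ * ‖d‖ := real_inner_le_norm _ _
        _ ≤ (L * ‖(x + t • d) - x‖) * ‖d‖ := by
            apply mul_le_mul_of_nonneg_right (hsmooth _ _) (norm_nonneg _)
        _ = L * t * ‖d‖ ^ 2 := by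
            rw [show (x + t • d) - x = t • d by abel, norm_smul]
            simp [Real.norm_eq_abs, abs_of_nonneg ht.1]
            ring
    show φ' t ≤ ⟪gradient f x, d⟫ + L * t * ‖d‖ ^ 2
    linarith
  have hval : (∫ t in (0:ℝ)..1, (⟪gradient f x, d⟫ + L * t * ‖d‖ ^ 2))
      = ⟪gradient f x, d⟫ + L / 2 * ‖d‖ ^ 2 := by
    have hc2 : IntervalIntegrable (fun t : ℝ => L * t * ‖d‖ ^ 2) MeasureTheory.volume 0 1 := by
      apply Continuous.intervalIntegrable
      exact (continuous_const.mul continuous_id).mul continuous_const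
    rw [intervalIntegral.integral_add intervalIntegrable_const hc2]
    have : (∫ t in (0:ℝ)..1, L * t * ‖d‖ ^ 2) = L / 2 * ‖d‖ ^ 2 := by
      have : (fun t : ℝ => L * t * ‖d‖ ^ 2) = fun t : ℝ => (L * ‖d‖ ^ 2) * t := by
        funext t; ring
      rw [this, intervalIntegral.integral_const_mul, integral_id]
      ring
    rw [this]
    simp
  linarith [hint ▸ hbound.trans_eq hval]

theorem inexact_gradient_descent_inequality {m : ℕ}
    (f : EuclideanSpace ℝ (Fin m) → ℝ) (L ν δ fstar : ℝ)
    (hdiff : Differentiable ℝ f) (hL : 0 < L)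
    (hsmooth : ∀ x y, ‖gradient f x - gradient f y‖ ≤ L * ‖x - y‖)
    (hν : 0 < ν)
    (hmin : ∀ x, fstar ≤ f x) (hatt : ∃ x, f x = fstar)
    (hPL : ∀ x, ν * (f x - fstar) ≤ (1 / 2) * ‖gradient f x‖ ^ 2)
    (hδ : 0 < δ) :
    ∀ (xbar g : EuclideanSpace ℝ (Fin m)),
      f (xbar - δ • g) - fstar ≤
        (1 - δ * ν / 2) * (f xbar - fstar) -
          (δ / 4) * (1 - 2 * δ * L) * ‖g‖ ^ 2 +
          (δ / 2) * ‖g - gradient f xbar‖ ^ 2 := by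
  intro xbar g
  have hdesc := descent_lemma f L hdiff hL hsmooth xbar (-(δ • g))
  have heq : xbar + -(δ • g) = xbar - δ • g := by abel
  rw [heq] at hdesc
  have hinner : ⟪gradient f xbar, -(δ • g)⟫ = -δ * ⟪gradient f xbar, g⟫ := by
    rw [inner_neg_right, real_inner_smul_right]; ring
  have hnorm : ‖-(δ • g)‖ ^ 2 = δ ^ 2 * ‖g‖ ^ 2 := by
    rw [norm_neg, norm_smul]
    simp [Real.norm_eq_abs, mul_pow, sq_abs]
  have hpol : ‖g - gradient f xbar‖ ^ 2 =
      ‖g‖ ^ 2 - 2 * ⟪gradient f xbar, g⟫ + ‖gradient f xbar‖ ^ 2 := by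
    rw [@norm_sub_sq_real, real_inner_comm]
  have hPLx := hPL xbar
  have hminx := hmin xbar
  rw [hinner, hnorm] at hdesc
  nlinarith [sq_nonneg ‖g‖, mul_pos hδ hν, mul_nonneg hδ.le (sub_nonneg.mpr hminx)]
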